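/- arXiv:2308.07467 — 2 statements merged into one kernel-verified Lean document; each statement's English description precedes it below -/
import Mathlib

section
/- Let f and g be generalized palindromes in ℂ[z,z⁻¹] with f̄ = u·z^j·f and ḡ = v·z^k·g for some u, v ∈ ℂ^× and j, k ∈ ℤ. Let F be a subfield of ℂ and suppose that f, g ∈ F[z,z⁻¹] and that f and g are ℂ[z,z⁻¹]-associates. Then either f = g = 0, or else there exists w ∈ F^× with v/u = conj(w)/w and moreover j ≡ k (mod 2). -/
open LaurentPolynomial
open scoped Classical

/-- The length of a Laurent polynomial: 1 plus the difference between the maximal and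
minimal exponents occurring with nonzero coefficient; the length of 0 is 0. -/
noncomputable def len {F : Type*} [Field F] (f : LaurentPolynomial F) : ℤ :=
  if h : f = 0 then 0
  else f.coeff.support.max' (Finsupp.support_nonempty_iff.mpr (AddMonoidAlgebra.coeff_eq_zero.not.mpr h))
     - f.coeff.support.min' (Finsupp.support_nonempty_iff.mpr (AddMonoidAlgebra.coeff_eq_zero.not.mpr h)) + 1

/-- Substitution `f(z) ↦ f(z^m)`: the image of `f` under the ring homomorphism
sending `z` to `z^m`. -/
noncomputable def subst {F : Type*} [Field F] (m : ℤ) (f : LaurentPolynomial F) :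
    LaurentPolynomial F :=
  AddMonoidAlgebra.mapDomainRingHom F (AddMonoidHom.mulLeft m) f

/-- The subring `F[z,z⁻¹]` of `E[z,z⁻¹]` consisting of Laurent polynomials all of whose
coefficients lie in the subfield `F` of `E`. -/
noncomputable def LRing {E : Type*} [Field E] (F : Subfield E) :
    Subring (LaurentPolynomial E) where
  carrier := {f : LaurentPolynomial E | ∀ n : ℤ, f.coeff n ∈ F}
  zero_mem' := fun n => F.zero_mem
  one_mem' := by
    intro n
    rw [AddMonoidAlgebra.one_def, AddMonoidAlgebra.coeff_single, Finsupp.single_apply]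
    split_ifs
    · exact F.one_mem
    · exact F.zero_mem
  add_mem' := by
    intro f g hf hg n
    rw [AddMonoidAlgebra.coeff_add, Finsupp.add_apply]
    exact add_mem (hf n) (hg n)
  neg_mem' := by
    intro f hf n
    rw [AddMonoidAlgebra.coeff_neg, Finsupp.neg_apply]
    exact neg_mem (hf n)
  mul_mem' := by
    intro f g hf hg n
    rw [AddMonoidAlgebra.coeff_mul]
    refine sum_mem fun a ha => sum_mem fun b hb => ?_
    dsimp only
    split_ifs
    · exact mul_mem (hf a) (hg b)
    · exact zero_mem F

/-- The conjugate of `f(z) = Σ f_j z^j`, namely `f̄(z) = Σ conj(f_j) z^{-j}`. -/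
noncomputable def lconj (f : LaurentPolynomial ℂ) : LaurentPolynomial ℂ :=
  AddMonoidAlgebra.ofCoeff
    (Finsupp.equivMapDomain (Equiv.neg ℤ) (Finsupp.mapRange (starRingEnd ℂ) (map_zero _) f.coeff))

/-- `f` and `g` are equicorrelational: `f·f̄ = c·g·ḡ` for some positive real `c`. -/
def Equicorrelational (f g : LaurentPolynomial ℂ) : Prop :=
  ∃ c : ℝ, 0 < c ∧ f * lconj f = C (c : ℂ) * (g * lconj g)

/-- `f` and `g` are trivially equicorrelational: `g` is a `ℂ[z,z⁻¹]`-associate of `f`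
or of `f̄`. -/
def TrivEquicorrelational (f g : LaurentPolynomial ℂ) : Prop :=
  Associated g f ∨ Associated g (lconj f)

/-- A generalized palindrome: `f̄` is a `ℂ[z,z⁻¹]`-associate of `f`. -/
def GenPalindrome (f : LaurentPolynomial ℂ) : Prop :=
  Associated (lconj f) f

/-- `g` is an `F[z,z⁻¹]`-associate of `f`: `g = u·f` for some unit `u` of the subring
`F[z,z⁻¹]` of `ℂ[z,z⁻¹]`. -/
def FAssoc (F : Subfield ℂ) (g f : LaurentPolynomial ℂ) : Prop :=
  ∃ u : (LRing F)ˣ, g = ((u : LRing F) : LaurentPolynomial ℂ) * f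

/-- The `F[z,z⁻¹]`-associate class of `f`. -/
def facl (F : Subfield ℂ) (f : LaurentPolynomial ℂ) : Set (LaurentPolynomial ℂ) :=
  {g | FAssoc F g f}

/-- The `F`-trivial equicorrelationality class of `f`: all elements of `F[z,z⁻¹]`
that are trivially equicorrelational to `f`. -/
def fte (F : Subfield ℂ) (f : LaurentPolynomial ℂ) : Set (LaurentPolynomial ℂ) :=
  {g | g ∈ LRing F ∧ TrivEquicorrelational f g}

/-- A `k`-ary sequence: a Laurent polynomial whose support is a segment of consecutive
integers and whose nonzero coefficients are complex `k`-th roots of unity. -/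
def IsKary (k : ℕ) (f : LaurentPolynomial ℂ) : Prop :=
  (∀ i j l : ℤ, i ≤ j → j ≤ l → f.coeff i ≠ 0 → f.coeff l ≠ 0 → f.coeff j ≠ 0) ∧
  ∀ n : ℤ, f.coeff n ≠ 0 → (f.coeff n) ^ k = 1

/-- A binary sequence: a Laurent polynomial whose support is a segment of consecutive
integers and whose nonzero coefficients all lie in `{1, -1}`. -/
def IsBinary (f : LaurentPolynomial ℂ) : Prop :=
  (∀ i j l : ℤ, i ≤ j → j ≤ l → f.coeff i ≠ 0 → f.coeff l ≠ 0 → f.coeff j ≠ 0) ∧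
  ∀ n : ℤ, f.coeff n ≠ 0 → f.coeff n = 1 ∨ f.coeff n = -1

/-! Units of `R[z,z⁻¹]` over a domain are the monomials `c·z^m`, so `g = c·z^m·f`.
Conjugating gives `ḡ = u·c̄·z^(j-m)·f`, while `ḡ = v·z^k·g = v·c·z^(k+m)·f`; cancelling `f ≠ 0`
leaves `v·c = u·c̄` and `k + m = j - m`. The scalar `c` lies in `F`, being the ratio of a
coefficient of `g` to one of `f`. -/

namespace LaurentPolynomial

theorem isUnit_iff_exists_C_mul_T {R : Type*} [CommRing R] [IsDomain R] {f : R[T;T⁻¹]} :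
    IsUnit f ↔ ∃ c : R, IsUnit c ∧ ∃ m : ℤ, f = C c * T m := by
  constructor
  · rintro ⟨W, rfl⟩
    obtain ⟨a, p, hp⟩ := exists_T_pow (W : R[T;T⁻¹])
    obtain ⟨b, q, hq⟩ := exists_T_pow (↑W⁻¹ : R[T;T⁻¹])
    have hpq : p * q = Polynomial.X ^ (a + b) := Polynomial.toLaurent_injective <| by
      rw [map_mul, hp, hq, Polynomial.toLaurent_X_pow, Nat.cast_add, T_add]
      calc (W : R[T;T⁻¹]) * T a * (↑W⁻¹ * T b) = ↑(W * W⁻¹) * (T a * T b) := by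
              rw [Units.val_mul]; ring
        _ = T a * T b := by rw [mul_inv_cancel, Units.val_one, one_mul]
    -- `T a` and `T b` clear the denominators of `W` and `W⁻¹`, so `p ∣ X ^ (a + b)`.
    obtain ⟨i, -, e, he⟩ := (dvd_prime_pow Polynomial.prime_X _).1 (Dvd.intro q hpq)
    obtain ⟨r, hr, hre⟩ := Polynomial.isUnit_iff.1 e⁻¹.isUnit
    refine ⟨r, hr, i - a, ?_⟩
    have hp' : p = Polynomial.C r * Polynomial.X ^ i := by
      rw [hre, ← he, mul_comm, Units.mul_inv_cancel_right]
    calc (W : R[T;T⁻¹]) = Polynomial.toLaurent p * T (-a) := by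
            rw [hp, mul_T_assoc, add_neg_cancel, T_zero, mul_one]
      _ = C r * T (i - a) := by
            rw [hp', map_mul, Polynomial.toLaurent_C, Polynomial.toLaurent_X_pow, mul_T_assoc,
              sub_eq_add_neg]
  · rintro ⟨c, hc, m, rfl⟩
    exact (hc.map C).mul (isUnit_T m)

theorem C_mul_T_inj {R : Type*} [Semiring R] {a b : R} {m n : ℤ} (ha : a ≠ 0) :
    C a * T m = C b * T n ↔ m = n ∧ a = b := by
  rw [← single_eq_C_mul_T, ← single_eq_C_mul_T, AddMonoidAlgebra.single_inj]
  simp [ha]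

theorem associated_iff_exists_C_mul_T {R : Type*} [CommRing R] [IsDomain R]
    {f g : R[T;T⁻¹]} : Associated f g ↔ ∃ c : R, IsUnit c ∧ ∃ m : ℤ, g = C c * T m * f := by
  constructor
  · rintro ⟨W, rfl⟩
    obtain ⟨c, hc, m, hW⟩ := isUnit_iff_exists_C_mul_T.1 W.isUnit
    exact ⟨c, hc, m, by rw [hW, mul_comm]⟩
  · rintro ⟨c, hc, m, rfl⟩
    exact ⟨(isUnit_iff_exists_C_mul_T.2 ⟨c, hc, m, rfl⟩).unit, mul_comm _ _⟩

end LaurentPolynomial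

theorem mem_of_C_mul_T_mul_mem_LRing {E : Type*} [Field E] {F : Subfield E}
    {f : E[T;T⁻¹]} {c : E} {m : ℤ} (hf0 : f ≠ 0) (hf : f ∈ LRing F)
    (hcf : C c * T m * f ∈ LRing F) : c ∈ F := by
  obtain ⟨n, hn⟩ := Finsupp.support_nonempty_iff.2 (AddMonoidAlgebra.coeff_eq_zero.not.2 hf0)
  have hfn : f.coeff n ≠ 0 := Finsupp.mem_support_iff.1 hn
  have hcoeff : (C c * T m * f).coeff (m + n) = c * f.coeff n := by
    rw [← single_eq_C_mul_T, AddMonoidAlgebra.coeff_single_mul_apply, neg_add_cancel_left]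
  have := mul_mem (hcf (m + n)) (inv_mem (hf n))
  rwa [hcoeff, mul_inv_cancel_right₀ hfn] at this

theorem lconj_eq_invert_map (f : ℂ[T;T⁻¹]) :
    lconj f = invert (AddMonoidAlgebra.mapRingHom ℤ (starRingEnd ℂ) f) := by
  ext n
  simp [lconj]

theorem lconj_mul (f g : ℂ[T;T⁻¹]) : lconj (f * g) = lconj f * lconj g := by
  simp only [lconj_eq_invert_map, map_mul]

theorem lconj_C_mul_T (c : ℂ) (m : ℤ) : lconj (C c * T m) = C (starRingEnd ℂ c) * T (-m) := by
  rw [lconj_eq_invert_map, ← single_eq_C_mul_T, AddMonoidAlgebra.mapRingHom_single,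
    single_eq_C_mul_T, map_mul, invert_C, invert_T]

theorem lconj_C_mul_T_mul {f : ℂ[T;T⁻¹]} {u : ℂ} {j : ℤ} (hf : lconj f = C u * T j * f)
    (c : ℂ) (m : ℤ) :
    lconj (C c * T m * f) = C (u * starRingEnd ℂ c) * T (j - m) * f := by
  rw [lconj_mul, lconj_C_mul_T, hf, map_mul, sub_eq_add_neg, T_add]
  ring

theorem stmt5 (f g : LaurentPolynomial ℂ) (u v : ℂ) (hu : u ≠ 0) (hv : v ≠ 0)
    (j k : ℤ) (hfp : lconj f = C u * T j * f) (hgp : lconj g = C v * T k * g)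
    (F : Subfield ℂ) (hfF : f ∈ LRing F) (hgF : g ∈ LRing F)
    (hassoc : Associated f g) :
    (f = 0 ∧ g = 0) ∨
      ((∃ w : ℂ, w ∈ F ∧ w ≠ 0 ∧ v / u = (starRingEnd ℂ) w / w) ∧
        j ≡ k [ZMOD 2]) := by
  obtain hf0 | hf0 := eq_or_ne f 0
  · exact Or.inl ⟨hf0, hassoc.eq_zero_iff.1 hf0⟩
  obtain ⟨c, hc, m, rfl⟩ := associated_iff_exists_C_mul_T.1 hassoc
  have hc0 : c ≠ 0 := hc.ne_zero
  have hmonomial : C (v * c) * T (k + m) = C (u * starRingEnd ℂ c) * T (j - m) := by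
    refine mul_right_cancel₀ hf0 ?_
    rw [← lconj_C_mul_T_mul hfp, hgp, map_mul, T_add]
    ring
  obtain ⟨hexp, hcoeff⟩ := (C_mul_T_inj (mul_ne_zero hv hc0)).1 hmonomial
  refine Or.inr ⟨⟨c, mem_of_C_mul_T_mul_mem_LRing hf0 hfF hgF, hc0, ?_⟩, ?_⟩
  · rw [div_eq_div_iff hu hc0]
    linear_combination hcoeff
  · exact Int.ModEq.symm (Int.modEq_iff_dvd.2 ⟨m, by omega⟩)
end

section
/- Let m and n be nonzero integers and let a, b, c, d be nonzero elements of ℂ[z,z⁻¹]. Let s be a greatest common divisor of a and c in ℂ[z,z⁻¹] and t a greatest common divisor of b and d in ℂ[z,z⁻¹], and write a = s·α, c = s·γ, b = t·β, d = t·δ. Set f(z) = a(z^m)·b(z^n) and g(z) = c(z^m)·d(z^n). Then f and g are ℂ[z,z⁻¹]-associates if and only if α(z^m) is a ℂ[z,z⁻¹]-associate of δ(z^n) and β(z^n) is a ℂ[z,z⁻¹]-associate of γ(z^m). -/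
open LaurentPolynomial
open scoped Classical

/-! Cancelling the common factor `s(z^m)·t(z^n)` reduces the claim to
`α(z^m)·β(z^n) ~ γ(z^m)·δ(z^n)`. Since `ℂ[z,z⁻¹]` is a principal ideal domain, the cofactors
`α, γ` (and `β, δ`) satisfy a Bézout identity, which survives the ring homomorphism
`z ↦ z^m`. Then `α(z^m)` divides `γ(z^m)·δ(z^n)` and is coprime to `γ(z^m)`, so it divides
`δ(z^n)`; the other three divisibilities follow the same way. -/

theorem IsLocalization.isPrincipalIdealRing {R S : Type*} [CommRing R] [CommRing S]
    [Algebra R S] (M : Submonoid R) [IsLocalization M S] [IsPrincipalIdealRing R] :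
    IsPrincipalIdealRing S := by
  refine ⟨fun I => ?_⟩
  obtain ⟨g, hg⟩ := IsPrincipalIdealRing.principal (I.comap (algebraMap R S))
  refine ⟨algebraMap R S g, ?_⟩
  rw [← IsLocalization.map_under M S I, Ideal.under_def, hg, Ideal.map_span, Set.image_singleton]

namespace LaurentPolynomial

variable {K : Type*} [Field K]

instance : IsDomain K[T;T⁻¹] :=
  @NoZeroDivisors.to_isDomain _ _ _ (inferInstanceAs (NoZeroDivisors (AddMonoidAlgebra K ℤ)))

instance : IsPrincipalIdealRing K[T;T⁻¹] :=
  IsLocalization.isPrincipalIdealRing (Submonoid.powers (Polynomial.X : Polynomial K))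

end LaurentPolynomial

theorem isRelPrime_of_gcd_cofactors {R : Type*} [CommMonoidWithZero R] [IsCancelMulZero R]
    {a c s α γ : R}
    (hs : ∀ e, e ∣ a → e ∣ c → e ∣ s) (hs0 : s ≠ 0) (hα : a = s * α) (hγ : c = s * γ) :
    IsRelPrime α γ := fun e heα heγ => by
  have hse : s * e ∣ s * 1 := by
    rw [mul_one]
    exact hs _ (hα ▸ mul_dvd_mul_left s heα) (hγ ▸ mul_dvd_mul_left s heγ)
  exact isUnit_of_dvd_one ((mul_dvd_mul_iff_left hs0).mp hse)

theorem associated_mul_left_cancel_iff {M : Type*} [CommMonoidWithZero M] [IsCancelMulZero M]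
    {a b c : M} (ha : a ≠ 0) : Associated (a * b) (a * c) ↔ Associated b c :=
  ⟨fun h => h.of_mul_left (.refl a) ha, fun h => h.mul_left a⟩

theorem associated_mul_mul_iff_of_isCoprime {R : Type*} [CommSemiring R] [IsDomain R]
    {a b c d : R} (hac : IsCoprime a c) (hbd : IsCoprime b d) :
    Associated (a * b) (c * d) ↔ Associated a d ∧ Associated b c := by
  refine ⟨fun h => ⟨associated_of_dvd_dvd ?_ ?_, associated_of_dvd_dvd ?_ ?_⟩,
    fun ⟨had, hbc⟩ => mul_comm c d ▸ had.mul_mul hbc⟩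
  · exact hac.dvd_of_dvd_mul_left ((dvd_mul_right a b).trans h.dvd)
  · exact hbd.symm.dvd_of_dvd_mul_right ((dvd_mul_left d c).trans h.symm.dvd)
  · exact hbd.dvd_of_dvd_mul_right ((dvd_mul_left b a).trans h.dvd)
  · exact hac.symm.dvd_of_dvd_mul_left ((dvd_mul_right c d).trans h.symm.dvd)

noncomputable def substRingHom (F : Type*) [Field F] (m : ℤ) :
    LaurentPolynomial F →+* LaurentPolynomial F :=
  AddMonoidAlgebra.mapDomainRingHom F (AddMonoidHom.mulLeft m)

section subst

variable {F : Type*} [Field F] {m : ℤ}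

theorem subst_mul (f g : LaurentPolynomial F) : subst m (f * g) = subst m f * subst m g :=
  map_mul (substRingHom F m) f g

theorem subst_injective (hm : m ≠ 0) : Function.Injective (subst (F := F) m) :=
  AddMonoidAlgebra.mapDomain_injective fun _ _ h => mul_left_cancel₀ hm h

theorem subst_ne_zero (hm : m ≠ 0) {f : LaurentPolynomial F} (hf : f ≠ 0) : subst m f ≠ 0 :=
  (map_ne_zero_iff (substRingHom F m) (subst_injective hm)).mpr hf

theorem IsCoprime.subst {f g : LaurentPolynomial F} (h : IsCoprime f g) (m : ℤ) :
    IsCoprime (subst m f) (subst m g) :=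
  h.map (substRingHom F m)

end subst

theorem stmt17_general (m n : ℤ) (hm : m ≠ 0) (hn : n ≠ 0)
    (a b c d s t α β γ δ : LaurentPolynomial ℂ)
    (ha0 : a ≠ 0) (hb0 : b ≠ 0)
    (hs : s ∣ a ∧ s ∣ c ∧ ∀ e, e ∣ a → e ∣ c → e ∣ s)
    (ht : t ∣ b ∧ t ∣ d ∧ ∀ e, e ∣ b → e ∣ d → e ∣ t)
    (hα : a = s * α) (hγ : c = s * γ) (hβ : b = t * β) (hδ : d = t * δ) :
    Associated (subst m a * subst n b) (subst m c * subst n d) ↔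
      (Associated (subst m α) (subst n δ) ∧
        Associated (subst n β) (subst m γ)) := by
  have hs0 : s ≠ 0 := by rintro rfl; exact ha0 (by rw [hα, zero_mul])
  have ht0 : t ≠ 0 := by rintro rfl; exact hb0 (by rw [hβ, zero_mul])
  have hαγ : IsCoprime α γ := (isRelPrime_of_gcd_cofactors hs.2.2 hs0 hα hγ).isCoprime
  have hβδ : IsCoprime β δ := (isRelPrime_of_gcd_cofactors ht.2.2 ht0 hβ hδ).isCoprime
  have hST : subst m s * subst n t ≠ 0 := mul_ne_zero (subst_ne_zero hm hs0) (subst_ne_zero hn ht0)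
  rw [hα, hγ, hβ, hδ, subst_mul, subst_mul, subst_mul, subst_mul,
    mul_mul_mul_comm (subst m s) (subst m α), mul_mul_mul_comm (subst m s) (subst m γ)]
  exact (associated_mul_left_cancel_iff hST).trans
    (associated_mul_mul_iff_of_isCoprime (hαγ.subst m) (hβδ.subst n))

theorem stmt17 (m n : ℤ) (hm : m ≠ 0) (hn : n ≠ 0)
    (a b c d s t α β γ δ : LaurentPolynomial ℂ)
    (ha0 : a ≠ 0) (hb0 : b ≠ 0) (hc0 : c ≠ 0) (hd0 : d ≠ 0)
    (hs : s ∣ a ∧ s ∣ c ∧ ∀ e, e ∣ a → e ∣ c → e ∣ s)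
    (ht : t ∣ b ∧ t ∣ d ∧ ∀ e, e ∣ b → e ∣ d → e ∣ t)
    (hα : a = s * α) (hγ : c = s * γ) (hβ : b = t * β) (hδ : d = t * δ) :
    Associated (subst m a * subst n b) (subst m c * subst n d) ↔
      (Associated (subst m α) (subst n δ) ∧
        Associated (subst n β) (subst m γ)) :=
  stmt17_general m n hm hn a b c d s t α β γ δ ha0 hb0 hs ht hα hγ hβ hδ
end
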